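/- Let u ∈ W^{2,1}(a,b) and Φ ∈ W^{2,1}(A,B) with |Φ'| > 0 on [A,B] and Φ([A,B]) = [a,b]. Then u∘Φ ∈ W^{2,1}(A,B) with (u∘Φ)' = (u'∘Φ)Φ' and (u∘Φ)'' = (u''∘Φ)(Φ')² + (u'∘Φ)Φ''. Moreover the inverse function Ψ of Φ belongs to W^{2,1}(a,b) with Ψ' = 1/(Φ'∘Ψ) and Ψ'' = −(Φ''∘Ψ)/(Φ'∘Ψ)³. -/

import Mathlib

/-!
Rolle's theorem makes `Φ` injective on `[A, B]`, so the one-dimensional change of variables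
`∫_{Φ [A, B]} |g| = ∫_{[A, B]} |Φ'| |g ∘ Φ|` transfers integrability between the two intervals.
Both second derivatives are then continuous multiples of integrable functions:
`(u'' ∘ Φ) Φ'² = |Φ'| (|Φ'| (u'' ∘ Φ))`, and on `[A, B]` the candidate `Ψ''` satisfies
`|Φ'| (Ψ'' ∘ Φ) = -(|Φ'| / Φ'³) Φ''`. The inverse `Ψ` is continuous since `[A, B]` is compact,
and the one-variable inverse function theorem gives its derivatives inside `(a, b)`.
-/

open Set MeasureTheory Filter Topology Function

theorem IsCompact.continuousOn_image_of_leftInvOn {α β : Type*} [TopologicalSpace α]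
    [TopologicalSpace β] [T2Space β] {f : α → β} {g : β → α} {s : Set α} (hs : IsCompact s)
    (hf : ContinuousOn f s) (hleft : LeftInvOn g f s) : ContinuousOn g (f '' s) := by
  refine continuousOn_iff_isClosed.2 fun t ht => ⟨f '' (t ∩ s), ?_, ?_⟩
  · exact ((hs.inter_left ht).image_of_continuousOn (hf.mono inter_subset_right)).isClosed
  · rw [inter_eq_self_of_subset_left (image_mono inter_subset_right), hleft.image_inter']

theorem Set.OrdConnected.injOn_of_deriv_ne_zero {f : ℝ → ℝ} {s : Set ℝ} (hs : s.OrdConnected)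
    (hf : ContinuousOn f s) (hf' : ∀ x ∈ s, deriv f x ≠ 0) : InjOn f s := by
  intro x hx y hy hxy
  by_contra hne
  wlog hlt : x < y generalizing x y
  · exact this hy hx hxy.symm (Ne.symm hne) ((Ne.symm hne).lt_of_le (not_lt.1 hlt))
  obtain ⟨c, hc, hc0⟩ := exists_deriv_eq_zero hlt (hf.mono (hs.out hx hy)) hxy
  exact hf' c (hs.out hx hy (Ioo_subset_Icc_self hc)) hc0

theorem intervalIntegrable_iff_intervalIntegrable_abs_deriv_mul_comp {Φ Φ' g : ℝ → ℝ}
    {a b A B : ℝ} (hΦ : ∀ y ∈ uIcc A B, HasDerivWithinAt Φ (Φ' y) (uIcc A B) y)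
    (hinj : InjOn Φ (uIcc A B)) (himage : Φ '' uIcc A B = uIcc a b) :
    IntervalIntegrable g volume a b ↔
      IntervalIntegrable (fun y => |Φ' y| * g (Φ y)) volume A B := by
  rw [intervalIntegrable_iff', intervalIntegrable_iff', ← himage,
    integrableOn_image_iff_integrableOn_abs_deriv_smul measurableSet_uIcc hΦ hinj]
  rfl

section ChainRule

variable {𝕜 : Type*} [NontriviallyNormedField 𝕜] {u Φ : 𝕜 → 𝕜}

theorem deriv_comp_eq_mul (hu : Differentiable 𝕜 u) (hΦ : Differentiable 𝕜 Φ) :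
    deriv (u ∘ Φ) = fun y => deriv u (Φ y) * deriv Φ y :=
  funext fun y => deriv_comp y (hu (Φ y)) (hΦ y)

theorem deriv_deriv_comp (hu : Differentiable 𝕜 u) (hu' : Differentiable 𝕜 (deriv u))
    (hΦ : Differentiable 𝕜 Φ) (hΦ' : Differentiable 𝕜 (deriv Φ)) (y : 𝕜) :
    deriv (deriv (u ∘ Φ)) y =
      deriv (deriv u) (Φ y) * deriv Φ y ^ 2 + deriv u (Φ y) * deriv (deriv Φ) y := by
  have h : HasDerivAt (fun z => deriv u (Φ z) * deriv Φ z) _ y :=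
    ((hu' (Φ y)).hasDerivAt.comp y (hΦ y).hasDerivAt).mul (hΦ' y).hasDerivAt
  rw [deriv_comp_eq_mul hu hΦ, h.deriv, comp_apply]
  ring

end ChainRule

theorem intervalIntegrable_deriv_deriv_comp {u Φ : ℝ → ℝ} {a b A B : ℝ}
    (hu : Differentiable ℝ u) (hu' : Differentiable ℝ (deriv u))
    (hΦ : Differentiable ℝ Φ) (hΦ' : Differentiable ℝ (deriv Φ))
    (hu'' : IntervalIntegrable (deriv (deriv u)) volume a b)
    (hΦ'' : IntervalIntegrable (deriv (deriv Φ)) volume A B)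
    (hinj : InjOn Φ (uIcc A B)) (himage : Φ '' uIcc A B = uIcc a b) :
    IntervalIntegrable (deriv (deriv (u ∘ Φ))) volume A B := by
  have hweighted : IntervalIntegrable (fun y => |deriv Φ y| * deriv (deriv u) (Φ y)) volume A B :=
    (intervalIntegrable_iff_intervalIntegrable_abs_deriv_mul_comp
      (fun y _ => (hΦ y).hasDerivAt.hasDerivWithinAt) hinj himage).1 hu''
  have hfirst : IntervalIntegrable (fun y => deriv (deriv u) (Φ y) * deriv Φ y ^ 2) volume A B := by
    convert hweighted.continuousOn_mul hΦ'.continuous.abs.continuousOn using 2 with y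
    rw [← mul_assoc, abs_mul_abs_self]
    ring
  have hsecond : IntervalIntegrable (fun y => deriv u (Φ y) * deriv (deriv Φ) y) volume A B :=
    hΦ''.continuousOn_mul (hu'.continuous.comp hΦ.continuous).continuousOn
  rw [funext (deriv_deriv_comp hu hu' hΦ hΦ')]
  exact hfirst.add hsecond

section Inverse

variable {Φ Ψ : ℝ → ℝ} {s t : Set ℝ} {x : ℝ}

theorem hasDerivAt_of_rightInvOn (hΦ : Differentiable ℝ Φ) (hΨ : ContinuousOn Ψ t)
    (hinv : RightInvOn Ψ Φ t) (hmaps : MapsTo Ψ t s) (hreg : ∀ y ∈ s, deriv Φ y ≠ 0)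
    (hx : t ∈ 𝓝 x) : HasDerivAt Ψ (deriv Φ (Ψ x))⁻¹ x :=
  (hΦ (Ψ x)).hasDerivAt.of_local_left_inverse (hΨ.continuousAt hx)
    (hreg _ (hmaps (mem_of_mem_nhds hx))) (eventually_of_mem hx hinv)

theorem deriv_deriv_of_rightInvOn (hΦ : Differentiable ℝ Φ) (hΦ' : Differentiable ℝ (deriv Φ))
    (hΨ : ContinuousOn Ψ t) (hinv : RightInvOn Ψ Φ t) (hmaps : MapsTo Ψ t s)
    (hreg : ∀ y ∈ s, deriv Φ y ≠ 0) (hx : t ∈ 𝓝 x) :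
    deriv (deriv Ψ) x = -deriv (deriv Φ) (Ψ x) / deriv Φ (Ψ x) ^ 3 := by
  have hderiv : deriv Ψ =ᶠ[𝓝 x] fun z => (deriv Φ (Ψ z))⁻¹ := by
    filter_upwards [eventually_mem_nhds_iff.2 hx] with z hz
    exact (hasDerivAt_of_rightInvOn hΦ hΨ hinv hmaps hreg hz).deriv
  have hΨx := hasDerivAt_of_rightInvOn hΦ hΨ hinv hmaps hreg hx
  have hrecip : HasDerivAt (fun z => (deriv Φ (Ψ z))⁻¹) _ x :=
    ((hΦ' (Ψ x)).hasDerivAt.comp x hΨx).inv (hreg _ (hmaps (mem_of_mem_nhds hx)))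
  rw [hderiv.deriv_eq, hrecip.deriv, comp_apply]
  field_simp

theorem intervalIntegrable_inverse_deriv_deriv_formula {a b A B : ℝ} (hΦ : Differentiable ℝ Φ)
    (hΦ' : Continuous (deriv Φ)) (hΦ'' : IntervalIntegrable (deriv (deriv Φ)) volume A B)
    (hinj : InjOn Φ (uIcc A B)) (himage : Φ '' uIcc A B = uIcc a b)
    (hleft : LeftInvOn Ψ Φ (uIcc A B)) (hreg : ∀ y ∈ uIcc A B, deriv Φ y ≠ 0) :
    IntervalIntegrable (fun x => -deriv (deriv Φ) (Ψ x) / deriv Φ (Ψ x) ^ 3) volume a b := by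
  refine (intervalIntegrable_iff_intervalIntegrable_abs_deriv_mul_comp
    (fun y _ => (hΦ y).hasDerivAt.hasDerivWithinAt) hinj himage).2 ?_
  have hweight : ContinuousOn (fun y => -(|deriv Φ y| / deriv Φ y ^ 3)) (uIcc A B) :=
    (hΦ'.abs.continuousOn.div (hΦ'.pow 3).continuousOn fun y hy => pow_ne_zero 3 (hreg y hy)).neg
  refine (hΦ''.continuousOn_mul hweight).congr fun y hy => ?_
  simp only [hleft (uIoc_subset_uIcc hy)]
  ring

end Inverse

/-- `W^{2,1}` is modelled by everywhere twice differentiable functions with interval-integrable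
second derivative. -/
theorem chain_rule_W21
    (a b A B : ℝ) (hab : a < b) (hAB : A < B)
    (u : ℝ → ℝ)
    (hu : ∀ x, DifferentiableAt ℝ u x) (hu' : ∀ x, DifferentiableAt ℝ (deriv u) x)
    (huint : IntervalIntegrable (deriv (deriv u)) volume a b)
    (Φ : ℝ → ℝ)
    (hΦ : ∀ y, DifferentiableAt ℝ Φ y) (hΦ' : ∀ y, DifferentiableAt ℝ (deriv Φ) y)
    (hΦint : IntervalIntegrable (deriv (deriv Φ)) volume A B)
    (hΦreg : ∀ y ∈ Icc A B, deriv Φ y ≠ 0)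
    (hΦonto : Φ '' Icc A B = Icc a b) :
    -- chain rule for u ∘ Φ, and u∘Φ ∈ W^{2,1}(A,B)
    ((∀ y ∈ Icc A B, deriv (u ∘ Φ) y = deriv u (Φ y) * deriv Φ y) ∧
     (∀ y ∈ Icc A B, deriv (deriv (u ∘ Φ)) y =
        deriv (deriv u) (Φ y) * (deriv Φ y) ^ 2 + deriv u (Φ y) * deriv (deriv Φ) y) ∧
     IntervalIntegrable (deriv (deriv (u ∘ Φ))) volume A B) ∧
    -- the inverse Ψ of Φ and its formulas, and Ψ ∈ W^{2,1}(a,b)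
    (∃ Ψ : ℝ → ℝ,
      (∀ y ∈ Icc A B, Ψ (Φ y) = y) ∧ (∀ x ∈ Icc a b, Φ (Ψ x) = x) ∧
      (∀ x ∈ Ioo a b, deriv Ψ x = 1 / deriv Φ (Ψ x)) ∧
      (∀ x ∈ Ioo a b, deriv (deriv Ψ) x =
        -(deriv (deriv Φ) (Ψ x)) / (deriv Φ (Ψ x)) ^ 3) ∧
      IntervalIntegrable (deriv (deriv Ψ)) volume a b) := by
  rw [← uIcc_of_le hAB.le] at hΦreg hΦonto ⊢
  rw [← uIcc_of_le hab.le] at hΦonto ⊢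
  have hΦc : Continuous Φ := Differentiable.continuous hΦ
  have hinj : InjOn Φ (uIcc A B) :=
    ordConnected_uIcc.injOn_of_deriv_ne_zero hΦc.continuousOn hΦreg
  have hbij : BijOn Φ (uIcc A B) (uIcc a b) :=
    ⟨hΦonto ▸ mapsTo_image Φ _, hinj, hΦonto ▸ surjOn_image Φ _⟩
  refine ⟨⟨fun y _ => deriv_comp y (hu (Φ y)) (hΦ y),
    fun y _ => deriv_deriv_comp hu hu' hΦ hΦ' y,
    intervalIntegrable_deriv_deriv_comp hu hu' hΦ hΦ' huint hΦint hinj hΦonto⟩, ?_⟩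
  set Ψ := invFunOn Φ (uIcc A B)
  have hinv : InvOn Ψ Φ (uIcc A B) (uIcc a b) := hbij.invOn_invFunOn
  have hmaps : MapsTo Ψ (uIcc a b) (uIcc A B) := hbij.surjOn.mapsTo_invFunOn
  have hΨc : ContinuousOn Ψ (uIcc a b) :=
    hΦonto ▸ isCompact_uIcc.continuousOn_image_of_leftInvOn hΦc.continuousOn hinv.1
  have hnhds : ∀ x ∈ Ioo a b, uIcc a b ∈ 𝓝 x := fun x hx =>
    uIcc_of_le hab.le ▸ Icc_mem_nhds hx.1 hx.2
  have hΨ'' : ∀ x ∈ Ioo a b, deriv (deriv Ψ) x = -deriv (deriv Φ) (Ψ x) / deriv Φ (Ψ x) ^ 3 :=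
    fun x hx => deriv_deriv_of_rightInvOn hΦ hΦ' hΨc hinv.2 hmaps hΦreg (hnhds x hx)
  refine ⟨Ψ, hinv.1, hinv.2, fun x hx => ?_, hΨ'', ?_⟩
  · rw [one_div, (hasDerivAt_of_rightInvOn hΦ hΨc hinv.2 hmaps hΦreg (hnhds x hx)).deriv]
  · have h := intervalIntegrable_inverse_deriv_deriv_formula hΦ (Differentiable.continuous hΦ')
      hΦint hinj hΦonto hinv.1 hΦreg
    rw [intervalIntegrable_iff_integrableOn_Ioo_of_le hab.le] at h ⊢
    exact h.congr_fun (fun x hx => (hΨ'' x hx).symm) measurableSet_Ioo
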